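/- arXiv:2206.08126 — 2 statements merged into one kernel-verified Lean document; each statement's English description precedes it below -/
import Mathlib

section
/- Let d ≥ 1 and let μ̃_{1,l}, μ̃_{2,l}, σ̃_{1,l}, σ̃_{2,l} (l = 1,…,d) be real numbers with μ̃_{1,l} ≠ μ̃_{2,l} and σ̃_{1,l} + σ̃_{2,l} > 0 for every l. Define U(ω) = 8·(Σ_{l=1}^d ω_l⁴ (σ̃_{1,l} + σ̃_{2,l})²) / (Σ_{l=1}^d ω_l² (μ̃_{1,l} − μ̃_{2,l})²)² for ω ∈ [0,∞)^d with ω ≠ 0. Then the minimum value of U over this domain equals 8 / (Σ_{l=1}^d (μ̃_{1,l} − μ̃_{2,l})⁴/(σ̃_{1,l} + σ̃_{2,l})²), and U(ω) attains this minimum if and only if there exists a constant c > 0 such that ω_l = c·|μ̃_{1,l} − μ̃_{2,l}|/(σ̃_{1,l} + σ̃_{2,l}) for every l. -/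
/-!
Put `x_l = ω_l²`, `a_l = (μ̃_{1,l} - μ̃_{2,l})²` and `b_l = (σ̃_{1,l} + σ̃_{2,l})²`. Then
`U(ω) / 8 = ∑ x² b / (∑ x a)²`, and the weighted Cauchy–Schwarz inequality
`(∑ x a)² ≤ (∑ x² b) (∑ a² / b)` is exactly the lower bound. Completing the square,
`∑ b (x - t a / b)² = ∑ x² b - 2 t ∑ x a + t² ∑ a² / b`, which at `t = ∑ x a / ∑ a² / b` equals
the Cauchy–Schwarz defect divided by `∑ a² / b`; so equality holds iff `x` is proportional to
`a / b`, i.e. iff `ω` is proportional to `|μ̃_{1,l} - μ̃_{2,l}| / (σ̃_{1,l} + σ̃_{2,l})`.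
-/

open Finset

section CauchySchwarz

variable {ι R : Type*} [Fintype ι] [Field R] {a b x : ι → R}

theorem sum_mul_sub_mul_div_sq (hb : ∀ i, b i ≠ 0) (t : R) :
    ∑ i, b i * (x i - t * a i / b i) ^ 2 =
      ∑ i, x i ^ 2 * b i - 2 * t * ∑ i, x i * a i + t ^ 2 * ∑ i, a i ^ 2 / b i := by
  simp only [mul_sum, ← sum_sub_distrib, ← sum_add_distrib]
  refine sum_congr rfl fun i _ => ?_
  field_simp [hb i]
  ring

variable [LinearOrder R] [IsStrictOrderedRing R]

theorem sq_sum_mul_le (hb : ∀ i, 0 < b i) :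
    (∑ i, x i * a i) ^ 2 ≤ (∑ i, x i ^ 2 * b i) * ∑ i, a i ^ 2 / b i :=
  sum_sq_le_sum_mul_sum_of_sq_le_mul _ (fun i _ => mul_nonneg (sq_nonneg _) (hb i).le)
    (fun i _ => div_nonneg (sq_nonneg _) (hb i).le) fun i _ =>
      (by field_simp [(hb i).ne'] : _ = _).le

theorem sq_sum_mul_eq_of_forall_eq (t : R) (hb : ∀ i, b i ≠ 0) (hx : ∀ i, x i = t * a i / b i) :
    (∑ i, x i * a i) ^ 2 = (∑ i, x i ^ 2 * b i) * ∑ i, a i ^ 2 / b i := by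
  have hzero := sum_mul_sub_mul_div_sq hb (x := x) (a := a) t
  simp only [← hx, sub_self, zero_pow two_ne_zero, mul_zero, sum_const_zero] at hzero
  have hP : ∑ i, x i * a i = t * ∑ i, a i ^ 2 / b i := by
    rw [mul_sum]
    refine sum_congr rfl fun i _ => ?_
    rw [hx i]
    ring
  rw [hP] at hzero ⊢
  linear_combination (∑ i, a i ^ 2 / b i) * hzero

theorem sq_sum_mul_eq_iff (hb : ∀ i, 0 < b i) (ha : a ≠ 0) :
    (∑ i, x i * a i) ^ 2 = (∑ i, x i ^ 2 * b i) * ∑ i, a i ^ 2 / b i ↔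
      ∃ t, ∀ i, x i = t * a i / b i := by
  have hb' i := (hb i).ne'
  refine ⟨fun h => ?_, fun ⟨t, ht⟩ => sq_sum_mul_eq_of_forall_eq t hb' ht⟩
  have hS : 0 < ∑ i, a i ^ 2 / b i := by
    obtain ⟨j, hj⟩ := Function.ne_iff.mp ha
    exact sum_pos' (fun i _ => div_nonneg (sq_nonneg _) (hb i).le)
      ⟨j, mem_univ j, div_pos (pow_two_pos_of_ne_zero hj) (hb j)⟩
  obtain ⟨t, ht⟩ : ∃ t, t = (∑ i, x i * a i) / ∑ i, a i ^ 2 / b i := ⟨_, rfl⟩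
  refine ⟨t, fun i => ?_⟩
  have hzero : ∑ i, b i * (x i - t * a i / b i) ^ 2 = 0 := by
    rw [sum_mul_sub_mul_div_sq hb', ht]
    field_simp
    linear_combination -h
  have hi := (sum_eq_zero_iff_of_nonneg fun i _ => mul_nonneg (hb i).le (sq_nonneg _)).mp
    hzero i (mem_univ i)
  simpa [hb' i, sub_eq_zero] using hi

end CauchySchwarz

theorem exists_sq_eq_mul_sq_iff {ι : Type*} {w r : ι → ℝ} (hw : ∀ i, 0 ≤ w i)
    (hr : ∀ i, 0 ≤ r i) (hw0 : w ≠ 0) :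
    (∃ t, ∀ i, w i ^ 2 = t * r i ^ 2) ↔ ∃ c > 0, ∀ i, w i = c * r i := by
  refine ⟨fun ⟨t, ht⟩ => ?_, fun ⟨c, _, hc⟩ => ⟨c ^ 2, fun i => by rw [hc i]; ring⟩⟩
  -- `√(t * r²) = √t * r` holds for every `t`: for `t < 0` both sides are `0`.
  have hwt : ∀ i, w i = √t * r i := fun i => by
    rw [← Real.sqrt_sq (hw i), ht i, Real.sqrt_mul' _ (sq_nonneg _), Real.sqrt_sq (hr i)]
  refine ⟨√t, (Real.sqrt_nonneg t).lt_of_ne fun h0 => hw0 ?_, hwt⟩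
  funext i
  rw [hwt i, ← h0, zero_mul, Pi.zero_apply]

section Ratio

variable {ι : Type*} [Fintype ι] {a s w : ι → ℝ}

theorem sum_sq_mul_sq_pos (ha : ∀ i, a i ≠ 0) (hw : w ≠ 0) : 0 < ∑ i, w i ^ 2 * a i ^ 2 := by
  obtain ⟨j, hj : w j ≠ 0⟩ := Function.ne_iff.mp hw
  have := ha j
  exact sum_pos' (fun i _ => by positivity) ⟨j, mem_univ j, by positivity⟩

theorem sum_pow_four_div_sq_pos [Nonempty ι] (ha : ∀ i, a i ≠ 0) (hs : ∀ i, 0 < s i) :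
    0 < ∑ i, a i ^ 4 / s i ^ 2 :=
  sum_pos (fun i _ => by have := ha i; have := hs i; positivity) univ_nonempty

theorem one_div_sum_le_div_sq (ha : ∀ i, a i ≠ 0) (hs : ∀ i, 0 < s i) (hw : w ≠ 0) :
    1 / ∑ i, a i ^ 4 / s i ^ 2 ≤ (∑ i, w i ^ 4 * s i ^ 2) / (∑ i, w i ^ 2 * a i ^ 2) ^ 2 := by
  obtain ⟨j, -⟩ := Function.ne_iff.mp hw
  have : Nonempty ι := ⟨j⟩
  rw [div_le_div_iff₀ (sum_pow_four_div_sq_pos ha hs) (pow_pos (sum_sq_mul_sq_pos ha hw) 2),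
    one_mul]
  have hcs := sq_sum_mul_le (x := fun i => w i ^ 2) (a := fun i => a i ^ 2)
    fun i => pow_pos (hs i) 2
  simp only [← pow_mul, Nat.reduceMul] at hcs
  exact hcs

theorem div_sq_eq_one_div_sum_iff (ha : ∀ i, a i ≠ 0) (hs : ∀ i, 0 < s i) (hw : ∀ i, 0 ≤ w i)
    (hw0 : w ≠ 0) :
    (∑ i, w i ^ 4 * s i ^ 2) / (∑ i, w i ^ 2 * a i ^ 2) ^ 2 = 1 / ∑ i, a i ^ 4 / s i ^ 2 ↔
      ∃ c > 0, ∀ i, w i = c * |a i| / s i := by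
  obtain ⟨j, -⟩ := Function.ne_iff.mp hw0
  have : Nonempty ι := ⟨j⟩
  have ha2 : (fun i => a i ^ 2) ≠ 0 := Function.ne_iff.mpr ⟨j, pow_ne_zero 2 (ha j)⟩
  rw [div_eq_div_iff (pow_pos (sum_sq_mul_sq_pos ha hw0) 2).ne'
    (sum_pow_four_div_sq_pos ha hs).ne', one_mul, eq_comm]
  have hcs := sq_sum_mul_eq_iff (x := fun i => w i ^ 2) (fun i => pow_pos (hs i) 2) ha2
  simp only [← pow_mul, Nat.reduceMul] at hcs
  rw [hcs]
  simp_rw [mul_div_assoc, ← sq_abs (a _), ← div_pow]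
  exact exists_sq_eq_mul_sq_iff hw (fun i => div_nonneg (abs_nonneg _) (hs i).le) hw0

end Ratio

/-- Optimization part of Proposition 3.1: the upper bound
`U(ω) = 8 ∑ ω⁴ (σ̃₁+σ̃₂)² / (∑ ω² (μ̃₁-μ̃₂)²)²` over the nonnegative orthant minus the
origin attains its minimum `8 / ∑ (μ̃₁-μ̃₂)⁴/(σ̃₁+σ̃₂)²` exactly when
`ω_l = c |μ̃₁-μ̃₂| / (σ̃₁+σ̃₂)` for some `c > 0`. -/
theorem stmt6 (d : ℕ) (hd : 1 ≤ d) (m1 m2 s1 s2 : Fin d → ℝ)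
    (hm : ∀ l, m1 l ≠ m2 l) (hs : ∀ l, 0 < s1 l + s2 l)
    (U : (Fin d → ℝ) → ℝ)
    (hU : ∀ w, U w = 8 * (∑ l, (w l) ^ 4 * (s1 l + s2 l) ^ 2) /
      (∑ l, (w l) ^ 2 * (m1 l - m2 l) ^ 2) ^ 2) :
    IsLeast (U '' {w | (∀ l, 0 ≤ w l) ∧ w ≠ 0})
      (8 / ∑ l, (m1 l - m2 l) ^ 4 / (s1 l + s2 l) ^ 2) ∧
    ∀ w : Fin d → ℝ, (∀ l, 0 ≤ w l) → w ≠ 0 →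
      (U w = 8 / ∑ l, (m1 l - m2 l) ^ 4 / (s1 l + s2 l) ^ 2 ↔
        ∃ c > (0 : ℝ), ∀ l, w l = c * |m1 l - m2 l| / (s1 l + s2 l)) := by
  have ha : ∀ l, m1 l - m2 l ≠ 0 := fun l => sub_ne_zero.mpr (hm l)
  have hU' : ∀ w, U w = 8 * ((∑ l, w l ^ 4 * (s1 l + s2 l) ^ 2) /
      (∑ l, w l ^ 2 * (m1 l - m2 l) ^ 2) ^ 2) := fun w => (hU w).trans (mul_div_assoc ..)
  rw [← mul_one_div (8 : ℝ)]
  have hopt : ∀ w : Fin d → ℝ, (∀ l, 0 ≤ w l) → w ≠ 0 →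
      (U w = 8 * (1 / ∑ l, (m1 l - m2 l) ^ 4 / (s1 l + s2 l) ^ 2) ↔
        ∃ c > (0 : ℝ), ∀ l, w l = c * |m1 l - m2 l| / (s1 l + s2 l)) := fun w hw hw0 => by
    rw [hU', mul_right_inj' (by norm_num)]
    exact div_sq_eq_one_div_sum_iff ha hs hw hw0
  set r : Fin d → ℝ := fun l => |m1 l - m2 l| / (s1 l + s2 l)
  have hr : ∀ l, 0 ≤ r l := fun l => div_nonneg (abs_nonneg _) (hs l).le
  have hr0 : r ≠ 0 := Function.ne_iff.mpr
    ⟨⟨0, hd⟩, (div_pos (abs_pos.mpr (ha _)) (hs _)).ne'⟩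
  refine ⟨⟨⟨r, ⟨hr, hr0⟩, ?_⟩, ?_⟩, hopt⟩
  · exact (hopt r hr hr0).mpr ⟨1, one_pos, fun l => by rw [one_mul]⟩
  · rintro _ ⟨w, ⟨-, hw0⟩, rfl⟩
    rw [hU']
    exact mul_le_mul_of_nonneg_left (one_div_sum_le_div_sq ha hs hw0) (by norm_num)
end

section
/- For every real k with 0 < k ≤ 1, the second derivative of φ_k is strictly negative at every λ > 0; that is, φ_k is strictly concave on (0, ∞). -/
/-- The paper's channel-wise feature transformation (Eq. (1)). -/
noncomputable def phi (k : ℝ) (l : ℝ) : ℝ :=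
  if 0 < l then 1 / (Real.log (1 / l + 1)) ^ k else 0

/-!
Writing `L = log (1 + 1/λ)`, so that `L' = -1 / (λ (λ + 1))`, two differentiations of
`φ_k = L ^ (-k)` give
`φ_k'' = k L ^ (-k - 2) ((k + 1) - (2λ + 1) L) / (λ (λ + 1)) ^ 2`.
The first term `2 / (2λ + 1)` of the series
`log (1 + 1/λ) = ∑ 2 / (2n + 1) (2λ + 1) ^ -(2n + 1)` already gives `(2λ + 1) L > 2 ≥ k + 1`.
-/

open Real Set

theorem two_lt_mul_log_one_add_inv {a : ℝ} (ha : 0 < a) :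
    2 < (2 * a + 1) * log (1 + a⁻¹) := by
  have hfirst := lt_hasSum (hasSum_log_one_add_inv ha) 0 (fun _ _ => by positivity)
    1 one_ne_zero (by positivity)
  norm_num at hfirst
  rw [← div_eq_mul_inv, div_lt_iff₀ (by positivity)] at hfirst
  linarith

theorem log_one_div_add_one_pos {x : ℝ} (hx : 0 < x) : 0 < log (1 / x + 1) :=
  log_pos (by linarith [one_div_pos.mpr hx])

theorem hasDerivAt_log_one_div_add_one {x : ℝ} (hx : 0 < x) :
    HasDerivAt (fun y => log (1 / y + 1)) (-(x * (x + 1))⁻¹) x := by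
  have hinv : HasDerivAt (fun y : ℝ => 1 / y + 1) (-(x ^ 2)⁻¹) x := by
    simpa only [one_div] using (hasDerivAt_inv hx.ne').add_const 1
  convert hinv.log (by positivity) using 1
  field_simp
  ring

theorem phi_eqOn_rpow_neg (k : ℝ) :
    EqOn (phi k) (fun x => log (1 / x + 1) ^ (-k)) (Ioi 0) := by
  intro x hx
  rw [phi, if_pos (mem_Ioi.mp hx)]
  dsimp only
  rw [rpow_neg (log_one_div_add_one_pos hx).le, inv_eq_one_div]

theorem hasDerivAt_phi (k : ℝ) {x : ℝ} (hx : 0 < x) :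
    HasDerivAt (phi k) (k * log (1 / x + 1) ^ (-k - 1) / (x * (x + 1))) x := by
  have hL := (hasDerivAt_log_one_div_add_one hx).rpow_const (p := -k)
    (Or.inl (log_one_div_add_one_pos hx).ne')
  refine (hL.congr_of_eventuallyEq ?_).congr_deriv (by ring)
  exact (phi_eqOn_rpow_neg k).eventuallyEq_of_mem (Ioi_mem_nhds hx)

theorem hasDerivAt_deriv_phi (k : ℝ) {x : ℝ} (hx : 0 < x) :
    HasDerivAt (deriv (phi k))
      (k * log (1 / x + 1) ^ (-k - 2) * ((k + 1) - (2 * x + 1) * log (1 / x + 1))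
        / (x * (x + 1)) ^ 2) x := by
  set L := log (1 / x + 1) with hL
  have hLpos : 0 < L := log_one_div_add_one_pos hx
  have hderiv : deriv (phi k) =ᶠ[nhds x]
      fun y => k * log (1 / y + 1) ^ (-k - 1) / (y * (y + 1)) :=
    Filter.eventually_of_mem (Ioi_mem_nhds hx) fun y hy => (hasDerivAt_phi k hy).deriv
  have hpow := (hasDerivAt_log_one_div_add_one hx).rpow_const (p := -k - 1) (Or.inl hLpos.ne')
  have hden : HasDerivAt (fun y : ℝ => y * (y + 1)) (2 * x + 1) x :=
    ((hasDerivAt_id' x).mul ((hasDerivAt_id' x).add_const 1)).congr_deriv (by ring)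
  refine (((hpow.const_mul k).div hden (by positivity)).congr_of_eventuallyEq hderiv).congr_deriv ?_
  have hsplit : L ^ (-k - 1) = L ^ (-k - 2) * L := by
    rw [← rpow_add_one hLpos.ne', show -k - 2 + 1 = -k - 1 by ring]
  rw [← hL, hsplit, show -k - 1 - 1 = -k - 2 by ring]
  field_simp
  ring

theorem deriv_deriv_phi_neg {k : ℝ} (hk0 : 0 < k) (hk1 : k ≤ 1) {x : ℝ} (hx : 0 < x) :
    deriv (deriv (phi k)) x < 0 := by
  rw [(hasDerivAt_deriv_phi k hx).deriv]
  have hkey : 2 < (2 * x + 1) * log (1 / x + 1) := by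
    rw [one_div, add_comm x⁻¹]
    exact two_lt_mul_log_one_add_inv hx
  apply div_neg_of_neg_of_pos _ (by positivity)
  exact mul_neg_of_pos_of_neg
    (mul_pos hk0 (rpow_pos_of_pos (log_one_div_add_one_pos hx) _)) (by linarith)

/-- For every `0 < k ≤ 1`, the second derivative of `φ_k` is strictly negative at every
`λ > 0`; that is, `φ_k` is strictly concave on `(0, ∞)`. -/
theorem stmt15 (k : ℝ) (hk0 : 0 < k) (hk1 : k ≤ 1) :
    (∀ l : ℝ, 0 < l → deriv (deriv (phi k)) l < 0) ∧
    StrictConcaveOn ℝ (Set.Ioi 0) (phi k) :=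
  ⟨fun _ hl => deriv_deriv_phi_neg hk0 hk1 hl,
    strictConcaveOn_of_deriv2_neg' (convex_Ioi 0)
      (fun _ hx => (hasDerivAt_phi k hx).continuousAt.continuousWithinAt)
      (fun _ hx => deriv_deriv_phi_neg hk0 hk1 hx)⟩
end
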